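/- Let β > 0, d = b − b' > 0, μ ∈ ℂ, and W : [b', b] → ℂ solve W'' − β² W = −μ ζ on (b', b) with W'(b) + β W(b) = 0. Then |W(b)| ≤ |μ|/(2β²) · ‖ζ‖_{L^∞([b',b])} + e^{−dβ} |W(b')|. -/

import Mathlib

/-!
Writing `g = W' + β W`, the equation factors into the first-order system
`g' = β g - μ ζ`, `W' = -β W + g`. Solving the first equation backwards
from `g b = 0` gives `‖g s‖ ≤ ‖μ‖ M (1 - e^{-β (b - s)}) / β`, and inserting this bound
into Duhamel's formula for the second one, solved forwards from `b'`, gives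
`‖W b‖ ≤ e^{-β d} ‖W b'‖ + ‖μ‖ M (1 - e^{-β d})² / (2 β²)`.
-/

open Real Set intervalIntegral

theorem integral_exp_mul_sub {a b c : ℝ} (hc : c ≠ 0) :
    ∫ s in a..b, exp (c * (a - s)) = (1 - exp (-c * (b - a))) / c := by
  have hF : ∀ s ∈ uIcc a b,
      HasDerivAt (fun s => -exp (c * (a - s)) / c) (exp (c * (a - s))) s := by
    intro s _
    refine ((((hasDerivAt_id' s).const_sub a).const_mul c).exp.neg.div_const c).congr_deriv ?_
    field_simp
  rw [integral_eq_sub_of_hasDerivAt hF ((by fun_prop : Continuous _).intervalIntegrable _ _)]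
  simp
  ring_nf

theorem integral_exp_mul_mul_one_sub_exp {a b c : ℝ} (hc : c ≠ 0) :
    ∫ s in a..b, exp (-c * (b - s)) * (1 - exp (-c * (b - s))) =
      (1 - exp (-c * (b - a))) ^ 2 / (2 * c) := by
  have hF : ∀ s ∈ uIcc a b, HasDerivAt (fun s => -(1 - exp (-c * (b - s))) ^ 2 / (2 * c))
      (exp (-c * (b - s)) * (1 - exp (-c * (b - s)))) s := by
    intro s _
    refine (((((hasDerivAt_id' s).const_sub b).const_mul (-c)).exp.const_sub 1).pow 2
      |>.neg.div_const (2 * c)).congr_deriv ?_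
    field_simp
    ring
  rw [integral_eq_sub_of_hasDerivAt hF ((by fun_prop : Continuous _).intervalIntegrable _ _)]
  simp
  ring

section LinearODE

variable {E : Type*} [NormedAddCommGroup E] [NormedSpace ℝ E] [CompleteSpace E]
  {f h : ℝ → E} {c a b : ℝ}

theorem eq_exp_smul_add_integral_of_hasDerivAt
    (hf : ∀ s ∈ uIcc a b, HasDerivAt f (c • f s + h s) s) (hh : ContinuousOn h (uIcc a b)) :
    f b = exp (c * (b - a)) • f a + ∫ s in a..b, exp (c * (b - s)) • h s := by
  have hderiv : ∀ s ∈ uIcc a b,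
      HasDerivAt (fun s => exp (c * (b - s)) • f s) (exp (c * (b - s)) • h s) s := by
    intro s hs
    have he : HasDerivAt (fun s => exp (c * (b - s))) (exp (c * (b - s)) * -c) s := by
      simpa using (((hasDerivAt_id' s).const_sub b).const_mul c).exp
    refine (he.smul (hf s hs)).congr_deriv ?_
    rw [smul_add, smul_smul, mul_neg, neg_smul]
    abel
  have hint : IntervalIntegrable (fun s => exp (c * (b - s)) • h s) MeasureTheory.volume a b :=
    ((by fun_prop : Continuous fun s => exp (c * (b - s))).continuousOn.smul hh).intervalIntegrable
  rw [integral_eq_sub_of_hasDerivAt hderiv hint]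
  simp

theorem norm_le_exp_mul_norm_add_integral_of_hasDerivAt {φ : ℝ → ℝ} (hab : a ≤ b)
    (hf : ∀ s ∈ Icc a b, HasDerivAt f (c • f s + h s) s) (hh : ContinuousOn h (Icc a b))
    (hφ : IntervalIntegrable φ MeasureTheory.volume a b)
    (hhφ : ∀ s ∈ Icc a b, ‖h s‖ ≤ φ s) :
    ‖f b‖ ≤ exp (c * (b - a)) * ‖f a‖ + ∫ s in a..b, exp (c * (b - s)) * φ s := by
  rw [← uIcc_of_le hab] at hf hh
  rw [eq_exp_smul_add_integral_of_hasDerivAt hf hh]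
  refine (norm_add_le _ _).trans (add_le_add ?_ ?_)
  · rw [norm_smul, norm_of_nonneg (exp_pos _).le]
  refine norm_integral_le_of_norm_le hab (.of_forall fun s hs => ?_) ?_
  · rw [norm_smul, norm_of_nonneg (exp_pos _).le]
    exact mul_le_mul_of_nonneg_left (hhφ s (Ioc_subset_Icc_self hs)) (exp_pos _).le
  · exact hφ.continuousOn_mul (by fun_prop)

theorem norm_le_of_hasDerivAt_of_right_eq_zero {K : ℝ} (hab : a ≤ b) (hc : c ≠ 0)
    (hf : ∀ s ∈ Icc a b, HasDerivAt f (c • f s + h s) s) (hh : ContinuousOn h (Icc a b))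
    (hfb : f b = 0) (hhK : ∀ s ∈ Icc a b, ‖h s‖ ≤ K) :
    ‖f a‖ ≤ K * (1 - exp (-c * (b - a))) / c := by
  rw [← uIcc_of_le hab, uIcc_comm] at hf hh
  rw [eq_exp_smul_add_integral_of_hasDerivAt hf hh, hfb, smul_zero, zero_add, integral_symm,
    norm_neg]
  calc ‖∫ s in a..b, exp (c * (a - s)) • h s‖ ≤ ∫ s in a..b, exp (c * (a - s)) * K := by
        refine norm_integral_le_of_norm_le hab (.of_forall fun s hs => ?_)
          ((by fun_prop : Continuous _).intervalIntegrable _ _)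
        rw [norm_smul, norm_of_nonneg (exp_pos _).le]
        exact mul_le_mul_of_nonneg_left (hhK s (Ioc_subset_Icc_self hs)) (exp_pos _).le
    _ = K * (1 - exp (-c * (b - a))) / c := by
        rw [integral_mul_const, integral_exp_mul_sub hc]
        ring

end LinearODE

theorem stmt9 (b' b : ℝ) (hb : b' < b) (β M : ℝ) (hβ : 0 < β) (μ : ℂ)
    (ζ : ℝ → ℂ) (hζ : ContinuousOn ζ (Set.Icc b' b))
    (W W' : ℝ → ℂ)
    (hW1 : ∀ x ∈ Set.Icc b' b, HasDerivAt W (W' x) x)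
    (hW2 : ∀ x ∈ Set.Icc b' b, HasDerivAt W' ((β : ℂ) ^ 2 * W x - μ * ζ x) x)
    (hWb : W' b + (β : ℂ) * W b = 0)
    (hM : ∀ x ∈ Set.Icc b' b, ‖ζ x‖ ≤ M) :
    ‖W b‖ ≤ ‖μ‖ / (2 * β ^ 2) * M + Real.exp (-(b - b') * β) * ‖W b'‖ := by
  set g : ℝ → ℂ := fun x => W' x + (β : ℂ) * W x
  have hg : ∀ x ∈ Icc b' b, HasDerivAt g (β • g x + -(μ * ζ x)) x := fun x hx =>
    ((hW2 x hx).add ((hW1 x hx).const_mul (β : ℂ))).congr_deriv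
      (by simp only [g, Complex.real_smul]; ring)
  have hW : ∀ x ∈ Icc b' b, HasDerivAt W (-β • W x + g x) x := fun x hx =>
    (hW1 x hx).congr_deriv (by simp only [g, Complex.real_smul]; push_cast; ring)
  have hg_le : ∀ s ∈ Icc b' b, ‖g s‖ ≤ ‖μ‖ * M * (1 - exp (-β * (b - s))) / β :=
    fun s hs => norm_le_of_hasDerivAt_of_right_eq_zero hs.2 hβ.ne'
      (fun x hx => hg x ⟨hs.1.trans hx.1, hx.2⟩)
      ((continuousOn_const.mul hζ).neg.mono (Icc_subset_Icc_left hs.1)) hWb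
      (fun x hx => by
        rw [norm_neg, norm_mul]
        exact mul_le_mul_of_nonneg_left (hM x ⟨hs.1.trans hx.1, hx.2⟩) (norm_nonneg μ))
  have hq : exp (-β * (b - b')) ≤ 1 := exp_le_one_iff.2 (by nlinarith)
  have hM0 : 0 ≤ M := (norm_nonneg _).trans (hM b ⟨hb.le, le_rfl⟩)
  rw [show -(b - b') * β = -β * (b - b') by ring]
  calc ‖W b‖ ≤ exp (-β * (b - b')) * ‖W b'‖ +
        ∫ s in b'..b, exp (-β * (b - s)) * (‖μ‖ * M * (1 - exp (-β * (b - s))) / β) :=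
        norm_le_exp_mul_norm_add_integral_of_hasDerivAt hb.le hW
          (fun x hx => (hg x hx).continuousAt.continuousWithinAt)
          ((by fun_prop : Continuous _).intervalIntegrable _ _) hg_le
    _ = ‖μ‖ / (2 * β ^ 2) * M * (1 - exp (-β * (b - b'))) ^ 2 +
        exp (-β * (b - b')) * ‖W b'‖ := by
        rw [integral_congr (g := fun s => ‖μ‖ * M / β *
            (exp (-β * (b - s)) * (1 - exp (-β * (b - s))))) (fun s _ => by ring),
          integral_const_mul, integral_exp_mul_mul_one_sub_exp hβ.ne']
        field_simp
        ring
    _ ≤ ‖μ‖ / (2 * β ^ 2) * M + exp (-β * (b - b')) * ‖W b'‖ := by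
        gcongr ?_ + _
        exact mul_le_of_le_one_right (by positivity)
          (pow_le_one₀ (sub_nonneg.2 hq) (sub_le_self _ (exp_pos _).le))
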